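/- For the density g(t) = α√π Φ(-√(2αt})/√(αt) on (0,∞), the n-th moment is E[T^n] = α^{-n} n!/(2n+1) for each natural number n ≥ 1; in particular the mean is 1/(3α) and the second moment is 2/(5α²). -/

import Mathlib

/-!
Since `d/dt Φ(-√(2αt)) = -√α e^{-αt} / (2√(πt))`, one has
`t^n g(t) = (2√(απ) (t^{n+1/2} Φ(-√(2αt)))' + α t^n e^{-αt}) / (2n+1)`,
an explicit antiderivative of the moment integrand.
The boundary term vanishes at `0`, and at `∞` by the Mills-ratio bound
`Φ(-x) ≤ e^{-x²/2} / (x√(2π))`; what remains is `α / (2n+1)` times the Gamma integral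
`∫₀^∞ t^n e^{-αt} dt = n! / α^{n+1}`.
-/

open MeasureTheory Set Real

/-- The standard normal distribution function Φ. -/
noncomputable def Phi (z : ℝ) : ℝ :=
  (Real.sqrt (2 * Real.pi))⁻¹ * ∫ y in Set.Iic z, Real.exp (-y ^ 2 / 2)

/-- The modified exponential density. -/
noncomputable def modExpPdf (α t : ℝ) : ℝ :=
  α * Real.sqrt Real.pi * Phi (-Real.sqrt (2 * α * t)) / Real.sqrt (α * t)

open Filter Topology
open scoped Nat

theorem hasDerivAt_integral_Iic {E : Type*} [NormedAddCommGroup E] [NormedSpace ℝ E]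
    [CompleteSpace E] {f : ℝ → E} (hf : Continuous f) (hfi : Integrable f) (z : ℝ) :
    HasDerivAt (fun x => ∫ y in Iic x, f y) (f z) z := by
  refine ((hf.integral_hasStrictDerivAt 0 z).hasDerivAt.const_add
    (∫ y in Iic 0, f y)).congr_of_eventuallyEq (Eventually.of_forall fun x => ?_)
  dsimp only
  rw [← intervalIntegral.integral_Iic_sub_Iic hfi.integrableOn hfi.integrableOn, add_sub_cancel]

theorem integrable_exp_neg_sq_div_two : Integrable fun y : ℝ => exp (-y ^ 2 / 2) :=
  (integrable_exp_neg_mul_sq one_half_pos).congr (Eventually.of_forall fun y => by ring_nf)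

theorem hasDerivAt_Phi (z : ℝ) : HasDerivAt Phi ((√(2 * π))⁻¹ * exp (-z ^ 2 / 2)) z :=
  (hasDerivAt_integral_Iic (by fun_prop) integrable_exp_neg_sq_div_two z).const_mul _

theorem continuous_Phi : Continuous Phi :=
  continuous_iff_continuousAt.2 fun z => (hasDerivAt_Phi z).continuousAt

theorem Phi_nonneg (z : ℝ) : 0 ≤ Phi z :=
  mul_nonneg (by positivity) (setIntegral_nonneg measurableSet_Iic fun _ _ => (exp_pos _).le)

theorem integrable_mul_exp_neg_sq_div_two : Integrable fun y : ℝ => y * exp (-y ^ 2 / 2) :=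
  (integrable_mul_exp_neg_mul_sq one_half_pos).congr (Eventually.of_forall fun y => by
    dsimp only; ring_nf)

theorem integral_Ioi_mul_exp_neg_sq_div_two (x : ℝ) :
    ∫ y in Ioi x, y * exp (-y ^ 2 / 2) = exp (-x ^ 2 / 2) := by
  have hderiv (y : ℝ) : HasDerivAt (fun y => -exp (-y ^ 2 / 2)) (y * exp (-y ^ 2 / 2)) y := by
    refine (((hasDerivAt_pow 2 y).neg.div_const 2).exp.neg).congr_deriv ?_
    simp only [Pi.neg_apply]
    push_cast
    ring
  have hlim : Tendsto (fun y : ℝ => -exp (-y ^ 2 / 2)) atTop (𝓝 0) := by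
    have : Tendsto (fun y : ℝ => -y ^ 2 / 2) atTop atBot :=
      (tendsto_neg_atTop_atBot.comp ((tendsto_pow_atTop two_ne_zero).atTop_div_const
        two_pos)).congr fun y => by simp [neg_div]
    simpa using (tendsto_exp_atBot.comp this).neg
  rw [integral_Ioi_of_hasDerivAt_of_tendsto' (fun y _ => hderiv y)
    integrable_mul_exp_neg_sq_div_two.integrableOn hlim]
  ring

theorem Phi_neg_le {x : ℝ} (hx : 0 < x) : Phi (-x) ≤ exp (-x ^ 2 / 2) / (x * √(2 * π)) := by
  have hsymm : ∫ y in Iic (-x), exp (-y ^ 2 / 2) = ∫ y in Ioi x, exp (-y ^ 2 / 2) := by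
    simp [← integral_comp_neg_Ioi]
  have hmono : ∫ y in Ioi x, exp (-y ^ 2 / 2) ≤ ∫ y in Ioi x, x⁻¹ * (y * exp (-y ^ 2 / 2)) := by
    refine setIntegral_mono_on integrable_exp_neg_sq_div_two.integrableOn
      (integrable_mul_exp_neg_sq_div_two.const_mul _).integrableOn measurableSet_Ioi fun y hy => ?_
    rw [← mul_assoc]
    exact le_mul_of_one_le_left (exp_pos _).le ((one_le_inv_mul₀ hx).2 (le_of_lt hy))
  calc Phi (-x) = (√(2 * π))⁻¹ * ∫ y in Ioi x, exp (-y ^ 2 / 2) := by rw [Phi, hsymm]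
    _ ≤ (√(2 * π))⁻¹ * ∫ y in Ioi x, x⁻¹ * (y * exp (-y ^ 2 / 2)) := by gcongr
    _ = exp (-x ^ 2 / 2) / (x * √(2 * π)) := by
      rw [integral_const_mul, integral_Ioi_mul_exp_neg_sq_div_two]
      field_simp

theorem integral_pow_mul_exp_neg_mul_Ioi {r : ℝ} (hr : 0 < r) (n : ℕ) :
    ∫ t in Ioi 0, t ^ n * exp (-(r * t)) = n ! / r ^ (n + 1) := by
  have := integral_rpow_mul_exp_neg_mul_Ioi (a := n + 1) (by positivity) hr
  simp_rw [add_sub_cancel_right, rpow_natCast, Gamma_nat_eq_factorial] at this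
  rw [this, one_div, inv_rpow hr.le, ← rpow_natCast]
  push_cast
  field_simp

theorem integrableOn_pow_mul_exp_neg_mul_Ioi {r : ℝ} (hr : 0 < r) (n : ℕ) :
    IntegrableOn (fun t => t ^ n * exp (-(r * t))) (Ioi 0) :=
  .of_integral_ne_zero (by rw [integral_pow_mul_exp_neg_mul_Ioi hr]; positivity)

theorem modExpPdf_nonneg {α : ℝ} (hα : 0 ≤ α) (t : ℝ) : 0 ≤ modExpPdf α t := by
  have := Phi_nonneg (-√(2 * α * t))
  unfold modExpPdf
  positivity

theorem hasDerivAt_pow_mul_sqrt (n : ℕ) {t : ℝ} (ht : 0 < t) :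
    HasDerivAt (fun t => t ^ n * √t) ((2 * n + 1) * t ^ n / (2 * √t)) t := by
  refine ((hasDerivAt_pow n t).mul (hasDerivAt_sqrt ht.ne')).congr_deriv ?_
  have hst : √t ≠ 0 := (sqrt_pos.2 ht).ne'
  rcases n with _ | n
  · simp
  · field_simp
    rw [sq_sqrt ht.le, pow_succ]
    push_cast
    ring

theorem hasDerivAt_Phi_neg_sqrt {α t : ℝ} (hα : 0 < α) (ht : 0 < t) :
    HasDerivAt (fun t => Phi (-√(2 * α * t))) (-(√α * exp (-(α * t)) / (2 * √π * √t))) t := by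
  have h2αt : 0 < 2 * α * t := by positivity
  have hinner : HasDerivAt (fun t => 2 * α * t) (2 * α) t := by
    simpa using (hasDerivAt_id t).const_mul (2 * α)
  refine ((hasDerivAt_Phi _).comp t ((hasDerivAt_sqrt h2αt.ne').comp t hinner).neg).congr_deriv ?_
  simp only [Pi.neg_apply, Function.comp_apply]
  rw [neg_sq, sq_sqrt h2αt.le, sqrt_mul (by positivity : (0 : ℝ) ≤ 2 * α) t,
    sqrt_mul zero_le_two α, sqrt_mul zero_le_two π]
  have := sqrt_pos.2 hα
  have := sqrt_pos.2 ht
  have := sqrt_pos.2 pi_pos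
  have := sqrt_pos.2 two_pos
  field_simp
  rw [sq_sqrt zero_le_two, sq_sqrt hα.le]

noncomputable def modExpMomentPrimitive (α : ℝ) (n : ℕ) (t : ℝ) : ℝ :=
  (2 * √(α * π) * (t ^ n * √t * Phi (-√(2 * α * t))) +
    α * ∫ s in (0 : ℝ)..t, s ^ n * exp (-(α * s))) / (2 * n + 1)

theorem continuous_modExpMomentPrimitive (α : ℝ) (n : ℕ) :
    Continuous (modExpMomentPrimitive α n) := by
  have : Continuous fun t => ∫ s in (0 : ℝ)..t, s ^ n * exp (-(α * s)) :=
    intervalIntegral.continuous_primitive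
      (fun a b => (by fun_prop : Continuous _).intervalIntegrable a b) 0
  unfold modExpMomentPrimitive
  have := continuous_Phi
  fun_prop

theorem modExpMomentPrimitive_zero (α : ℝ) (n : ℕ) : modExpMomentPrimitive α n 0 = 0 := by
  simp [modExpMomentPrimitive]

theorem hasDerivAt_modExpMomentPrimitive {α t : ℝ} (hα : 0 < α) (ht : 0 < t) (n : ℕ) :
    HasDerivAt (modExpMomentPrimitive α n) (t ^ n * modExpPdf α t) t := by
  have hI : HasDerivAt (fun t => ∫ s in (0 : ℝ)..t, s ^ n * exp (-(α * s)))
      (t ^ n * exp (-(α * t))) t :=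
    (Continuous.integral_hasStrictDerivAt (by fun_prop) 0 t).hasDerivAt
  refine (((((hasDerivAt_pow_mul_sqrt n ht).mul (hasDerivAt_Phi_neg_sqrt hα ht)).const_mul
    (2 * √(α * π))).add (hI.const_mul α)).div_const (2 * n + 1)).congr_deriv ?_
  rw [modExpPdf, sqrt_mul hα.le, sqrt_mul hα.le]
  have := sqrt_pos.2 hα
  have := sqrt_pos.2 ht
  have := sqrt_pos.2 pi_pos
  field_simp
  linear_combination (√π * (2 * n + 1) * Phi (-√(2 * α * t)) - √α * √t * exp (-(α * t))) *
    mul_self_sqrt hα.le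

theorem pow_mul_sqrt_mul_Phi_le {α t : ℝ} (hα : 0 < α) (ht : 0 < t) (n : ℕ) :
    t ^ n * √t * Phi (-√(2 * α * t)) ≤ t ^ n * exp (-(α * t)) / (2 * √(α * π)) := by
  have h2αt : 0 < 2 * α * t := by positivity
  have hmills := Phi_neg_le (sqrt_pos.2 h2αt)
  rw [sq_sqrt h2αt.le, show -(2 * α * t) / 2 = -(α * t) by ring] at hmills
  calc t ^ n * √t * Phi (-√(2 * α * t))
      ≤ t ^ n * √t * (exp (-(α * t)) / (√(2 * α * t) * √(2 * π))) := by gcongr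
    _ = t ^ n * exp (-(α * t)) / (2 * √(α * π)) := by
      rw [sqrt_mul (by positivity : (0 : ℝ) ≤ 2 * α) t, sqrt_mul zero_le_two α,
        sqrt_mul zero_le_two π, sqrt_mul hα.le π]
      have := sqrt_pos.2 hα
      have := sqrt_pos.2 ht
      have := sqrt_pos.2 pi_pos
      have := sqrt_pos.2 two_pos
      field_simp
      rw [sq_sqrt zero_le_two]

theorem tendsto_modExpMomentPrimitive_atTop {α : ℝ} (hα : 0 < α) (n : ℕ) :
    Tendsto (modExpMomentPrimitive α n) atTop (𝓝 (n ! / (α ^ n * (2 * n + 1)))) := by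
  have hexp : Tendsto (fun t => t ^ n * exp (-(α * t))) atTop (𝓝 0) := by
    simpa [rpow_natCast, neg_mul] using tendsto_rpow_mul_exp_neg_mul_atTop_nhds_zero n α hα
  have hboundary : Tendsto (fun t => t ^ n * √t * Phi (-√(2 * α * t))) atTop (𝓝 0) := by
    refine squeeze_zero' ?_ ?_ (by simpa using hexp.div_const (2 * √(α * π)))
    · filter_upwards [eventually_ge_atTop 0] with t ht
      have := Phi_nonneg (-√(2 * α * t))
      positivity
    · filter_upwards [eventually_gt_atTop 0] with t ht
      exact pow_mul_sqrt_mul_Phi_le hα ht n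
  have hintegral : Tendsto (fun t => ∫ s in (0 : ℝ)..t, s ^ n * exp (-(α * s))) atTop
      (𝓝 (n ! / α ^ (n + 1))) := by
    rw [← integral_pow_mul_exp_neg_mul_Ioi hα n]
    exact intervalIntegral_tendsto_integral_Ioi 0 (integrableOn_pow_mul_exp_neg_mul_Ioi hα n)
      tendsto_id
  have hvalue : (n ! / (α ^ n * (2 * n + 1)) : ℝ)
      = (2 * √(α * π) * 0 + α * (n ! / α ^ (n + 1))) / (2 * n + 1) := by
    rw [mul_zero, zero_add, pow_succ]
    field_simp
  rw [hvalue]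
  exact ((hboundary.const_mul _).add (hintegral.const_mul α)).div_const _

theorem integral_pow_mul_modExpPdf {α : ℝ} (hα : 0 < α) (n : ℕ) :
    ∫ t in Ioi 0, t ^ n * modExpPdf α t = n ! / (α ^ n * (2 * n + 1)) := by
  have := integral_Ioi_of_hasDerivAt_of_nonneg
    (continuous_modExpMomentPrimitive α n).continuousWithinAt
    (fun t ht => hasDerivAt_modExpMomentPrimitive hα ht n)
    (fun t ht => mul_nonneg (pow_nonneg (le_of_lt ht) n) (modExpPdf_nonneg hα.le t))
    (tendsto_modExpMomentPrimitive_atTop hα n)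
  rwa [modExpMomentPrimitive_zero, sub_zero] at this

/-- the n-th moment is α^{-n} n!/(2n+1) for n ≥ 1; in particular
the mean is 1/(3α) and the second moment is 2/(5α²). -/
theorem modified_exponential_moments (α : ℝ) (hα : 0 < α) :
    (∀ n : ℕ, 1 ≤ n →
      ∫ t in Set.Ioi (0:ℝ), t ^ n * modExpPdf α t
        = (Nat.factorial n : ℝ) / (α ^ n * (2 * n + 1))) ∧
    (∫ t in Set.Ioi (0:ℝ), t * modExpPdf α t = 1 / (3 * α)) ∧
    (∫ t in Set.Ioi (0:ℝ), t ^ 2 * modExpPdf α t = 2 / (5 * α ^ 2)) := by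
  refine ⟨fun n _ => integral_pow_mul_modExpPdf hα n, ?_, ?_⟩
  · have h1 := integral_pow_mul_modExpPdf hα 1
    simp only [pow_one] at h1
    rw [h1]
    norm_num [mul_comm]
  · rw [integral_pow_mul_modExpPdf hα 2]
    norm_num [mul_comm]
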